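/- arXiv:2312.11308 — 2 statements merged into one kernel-verified Lean document; each statement's English description precedes it below -/
import Mathlib

section
/- Let a, b ∈ ℝ with a ≠ b and let ε, δ > 0. Then the discs D_{ε,a} and D_{δ,b} are disjoint if and only if (a − b)² ≥ ε·δ. -/
/-- The open disc in the upper half-plane of diameter `ε` tangent to the real
axis at `r`: the open disc in `ℂ` with center `r + i·ε/2` and radius `ε/2`. -/
noncomputable def tangentDisc (ε r : ℝ) : Set ℂ :=
  Metric.ball ((r : ℂ) + (ε / 2) * Complex.I) (ε / 2)

theorem stmt2 (a b ε δ : ℝ) (hab : a ≠ b) (hε : 0 < ε) (hδ : 0 < δ) :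
    Disjoint (tangentDisc ε a) (tangentDisc δ b) ↔ (a - b) ^ 2 ≥ ε * δ := by
  rw [tangentDisc, tangentDisc, disjoint_ball_ball_iff (half_pos hε) (half_pos hδ),
    Complex.dist_eq_re_im]
  simp only [Complex.add_re, Complex.ofReal_re, Complex.mul_re, Complex.I_re, Complex.I_im,
    Complex.add_im, Complex.ofReal_im, Complex.mul_im, Complex.div_ofNat_re,
    Complex.div_ofNat_im]
  rw [show (a + (ε / 2 * 0 - 0 / 2 * 1) - (b + (δ / 2 * 0 - 0 / 2 * 1))) ^ 2 +
      (0 + (ε / 2 * 1 + 0 / 2 * 0) - (0 + (δ / 2 * 1 + 0 / 2 * 0))) ^ 2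
      = (a - b) ^ 2 + ((ε - δ) / 2) ^ 2 by ring]
  rw [show ε / 2 + δ / 2 = (ε + δ) / 2 by ring]
  rw [← Real.sqrt_sq (by positivity : (0:ℝ) ≤ (ε + δ) / 2),
    Real.sqrt_le_sqrt_iff (by positivity)]
  constructor <;> intro h <;> nlinarith
end

section
/- Let α ∈ (0,1) be irrational, with Gauss iterates α_n and continued-fraction convergents p_n/q_n. Then for every n ≥ 1 the n-th iterate G^n of the Gauss map is differentiable at α with (G^n)'(α) = (−1)^n · ∏_{i=0}^{n−1} α_i^{−2}; in particular |(G^n)'(α)| = (q_{n−1}·α − p_{n−1})^{−2} ≥ 1. -/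
/-!
Near an irrational `x` the integer part `⌊1/x⌋` is locally constant, so the Gauss map is locally
`y ↦ 1/y - k` and has derivative `-x⁻²` there; the chain rule along the orbit `α_0, α_1, …`
gives `(Gⁿ)'(α) = ∏ -α_i⁻²`. The errors `q_n α - p_n` and the signed products
`(-1)ⁿ α_0 ⋯ α_n` satisfy the same three-term recursion, because `α_{n+1} α_n = 1 - k_n α_n`,
so they coincide; squaring identifies `|(Gⁿ)'(α)|` with `(q_{n-1} α - p_{n-1})⁻²`, which is at
least `1` since every `α_i` lies in `(0, 1)`.
-/

/-- The Gauss map `G(x) = 1/x − ⌊1/x⌋`. -/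
noncomputable def gaussMap (x : ℝ) : ℝ := 1 / x - (⌊1 / x⌋ : ℝ)

open Finset

theorem Int.hasDerivAt_fract {x : ℝ} (hx : x ≠ ⌊x⌋) : HasDerivAt Int.fract 1 x := by
  have hmem : Set.Ioo (⌊x⌋ : ℝ) (⌊x⌋ + 1) ∈ nhds x :=
    isOpen_Ioo.mem_nhds ⟨(Int.floor_le x).lt_of_ne' hx, Int.lt_floor_add_one x⟩
  refine ((hasDerivAt_id x).sub_const (⌊x⌋ : ℝ)).congr_of_eventuallyEq ?_
  filter_upwards [hmem] with y hy
  rw [← Int.self_sub_floor, Int.floor_eq_iff.mpr ⟨hy.1.le, hy.2⟩, id]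

theorem gaussMap_eq_fract (x : ℝ) : gaussMap x = Int.fract x⁻¹ := by
  rw [gaussMap, one_div, Int.self_sub_floor]

theorem Irrational.gaussMap {x : ℝ} (hx : Irrational x) : Irrational (gaussMap x) := by
  rw [_root_.gaussMap, one_div]
  exact hx.inv.sub_intCast _

theorem Irrational.iterate_gaussMap {x : ℝ} (hx : Irrational x) (n : ℕ) :
    Irrational (_root_.gaussMap^[n] x) := by
  induction n with
  | zero => exact hx
  | succ n ih => rw [Function.iterate_succ_apply']; exact ih.gaussMap

theorem gaussMap_mem_Ioo {x : ℝ} (hx : Irrational x) : gaussMap x ∈ Set.Ioo (0 : ℝ) 1 := by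
  rw [gaussMap_eq_fract]
  exact ⟨Int.fract_pos.mpr (hx.inv.ne_int _), Int.fract_lt_one _⟩

theorem hasDerivAt_gaussMap {x : ℝ} (hx : Irrational x) :
    HasDerivAt gaussMap (-(x ^ 2)⁻¹) x := by
  have hfract := Int.hasDerivAt_fract (hx.inv.ne_int ⌊x⁻¹⌋)
  rw [show gaussMap = Int.fract ∘ Inv.inv from funext gaussMap_eq_fract, ← one_mul (-(x ^ 2)⁻¹)]
  exact hfract.comp x (hasDerivAt_inv hx.ne_zero)

theorem hasDerivAt_iterate_of_orbit {𝕜 : Type*} [NontriviallyNormedField 𝕜] {f f' : 𝕜 → 𝕜}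
    {x : 𝕜}
    (hf : ∀ i, HasDerivAt f (f' (f^[i] x)) (f^[i] x)) (n : ℕ) :
    HasDerivAt f^[n] (∏ i ∈ range n, f' (f^[i] x)) x := by
  induction n with
  | zero => simpa using hasDerivAt_id x
  | succ n ih =>
    rw [Function.iterate_succ', prod_range_succ, mul_comm]
    exact (hf n).comp x ih

theorem hasDerivAt_iterate_gaussMap {x : ℝ} (hx : Irrational x) (n : ℕ) :
    HasDerivAt gaussMap^[n] (∏ i ∈ range n, -((gaussMap^[i] x) ^ 2)⁻¹) x :=
  hasDerivAt_iterate_of_orbit (f' := fun y => -(y ^ 2)⁻¹)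
    (fun i => hasDerivAt_gaussMap (hx.iterate_gaussMap i)) n

theorem sub_convergent_eq_prod {a : ℕ → ℝ} {K p q : ℕ → ℤ} (hne : ∀ n, a n ≠ 0)
    (ha : ∀ n, a (n + 1) = 1 / a n - K n)
    (hp0 : p 0 = 0) (hp1 : p 1 = 1) (hq0 : q 0 = 1) (hq1 : q 1 = K 0)
    (hp : ∀ n, p (n + 2) = K (n + 1) * p (n + 1) + p n)
    (hq : ∀ n, q (n + 2) = K (n + 1) * q (n + 1) + q n) (n : ℕ) :
    (q n : ℝ) * a 0 - p n = (-1) ^ n * ∏ i ∈ range (n + 1), a i := by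
  have hmul : ∀ n, a (n + 1) * a n = 1 - K n * a n := fun n => by
    rw [ha n]; field_simp [hne n]
  induction n using Nat.twoStepInduction with
  | zero => simp [hp0, hq0]
  | one =>
    rw [prod_range_succ, prod_range_one, hp1, hq1]
    linear_combination hmul 0
  | more n ih₀ ih₁ =>
    calc (q (n + 2) : ℝ) * a 0 - p (n + 2)
        = K (n + 1) * ((q (n + 1) : ℝ) * a 0 - p (n + 1)) + ((q n : ℝ) * a 0 - p n) := by
          push_cast [hp, hq]; ring
      _ = (-1) ^ (n + 2) * ∏ i ∈ range (n + 2 + 1), a i := by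
          rw [ih₁, ih₀, prod_range_succ _ (n + 2), prod_range_succ _ (n + 1)]
          linear_combination -(-1) ^ n * (∏ i ∈ range (n + 1), a i) * hmul (n + 1)

theorem stmt11 (α : ℝ) (hα : α ∈ Set.Ioo (0 : ℝ) 1) (hirr : Irrational α)
    (a : ℕ → ℝ) (ha0 : a 0 = α)
    (ha : ∀ n, a (n + 1) = gaussMap (a n))
    (K : ℕ → ℤ) (hK : ∀ n, K n = ⌊1 / a n⌋)
    (p q : ℕ → ℤ) (hp0 : p 0 = 0) (hp1 : p 1 = 1)
    (hq0 : q 0 = 1) (hq1 : q 1 = K 0)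
    (hp : ∀ n, p (n + 2) = K (n + 1) * p (n + 1) + p n)
    (hq : ∀ n, q (n + 2) = K (n + 1) * q (n + 1) + q n) :
    ∀ n : ℕ, 1 ≤ n →
      HasDerivAt (gaussMap^[n])
        ((-1) ^ n * (∏ i ∈ Finset.range n, (a i) ^ 2)⁻¹) α ∧
      |(-1 : ℝ) ^ n * (∏ i ∈ Finset.range n, (a i) ^ 2)⁻¹| =
        (((q (n - 1) : ℝ) * α - (p (n - 1) : ℝ)) ^ 2)⁻¹ ∧
      1 ≤ (((q (n - 1) : ℝ) * α - (p (n - 1) : ℝ)) ^ 2)⁻¹ := by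
  have horbit : ∀ n, gaussMap^[n] α = a n := fun n => by
    induction n with
    | zero => exact ha0.symm
    | succ n ih => rw [Function.iterate_succ_apply', ih, ha]
  have hirr_a : ∀ n, Irrational (a n) := fun n => horbit n ▸ hirr.iterate_gaussMap n
  have hmem : ∀ n, a n ∈ Set.Ioo (0 : ℝ) 1 := fun
    | 0 => ha0 ▸ hα
    | n + 1 => ha n ▸ gaussMap_mem_Ioo (hirr_a n)
  have herr : ∀ n, (q n : ℝ) * α - p n = (-1) ^ n * ∏ i ∈ range (n + 1), a i := fun n =>
    ha0 ▸ sub_convergent_eq_prod (fun n => (hirr_a n).ne_zero)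
      (fun n => by rw [ha, gaussMap, hK]) hp0 hp1 hq0 hq1 hp hq n
  intro n hn
  obtain ⟨m, rfl⟩ := Nat.exists_eq_add_of_le' hn
  have hsq : ((q m : ℝ) * α - p m) ^ 2 = ∏ i ∈ range (m + 1), a i ^ 2 := by
    rw [herr, mul_pow, ← pow_mul, pow_mul', neg_one_sq, one_pow, one_mul, prod_pow]
  have hpos : 0 < ∏ i ∈ range (m + 1), a i ^ 2 := prod_pos fun i _ => pow_pos (hmem i).1 2
  refine ⟨?_, ?_, ?_⟩
  · simpa [horbit, prod_neg, prod_inv_distrib] using hasDerivAt_iterate_gaussMap hirr (m + 1)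
  · rw [Nat.add_sub_cancel, hsq, abs_mul, abs_pow, abs_neg, abs_one, one_pow, one_mul,
      abs_inv, abs_of_pos hpos]
  · rw [Nat.add_sub_cancel, hsq, one_le_inv₀ hpos]
    exact prod_le_one (fun i _ => sq_nonneg _)
      fun i _ => pow_le_one₀ (hmem i).1.le (hmem i).2.le
end
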